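/- arXiv:1412.3497 — 4 statements merged into one kernel-verified Lean document; each statement's English description precedes it below -/
import Mathlib

section
/- Let G be a finite simple graph, g,f:V(G)→ℤ⁺ with g(x)≤f(x) for all x, and H a subgraph of G. If for every subset S⊆V(G), setting T={x∈V(G)∖S : d_{G−S}(x)−d_H(x)+e_H(x,S)<f(x)}, we have g(S)+∑_{x∈T} d_{G−S}(x)−f(T) ≥ ∑_{x∈T} d_H(x)−e_H(S,T), then G admits all fractional (g,f)-factors excluding H, i.e., for every r:V(G)→ℤ⁺ with g(x)≤r(x)≤f(x) for all x, the graph G−E(H) has a fractional r-factor. -/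
/-!
Put `G' = G - E(H)`. Since `d_{G'-S}(x) = d_{G-S}(x) - d_H(x) + e_H(x, S)`, the hypothesis says
`∑_{x ∉ S} max(0, f(x) - d_{G'-S}(x)) ≤ g(S)` for every `S`. For `g ≤ r ≤ f` it gives
`r(P) ≤ r(Q) + e_{G'}(P, V ∖ Q)` for disjoint `P, Q`, and by the symmetry of `G'` then for all
`P, Q`. This cut condition is Hall's condition for choosing arcs `(x, y)` of `G'` so that every `x`
is the tail of exactly `r(x)` chosen arcs and every `y` the head of at most `r(y)` of them, hence of
exactly `r(y)` by counting. Averaging the chosen arcs with their reversals gives a fractional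
`r`-factor of `G'` with values in `{0, 1/2, 1}`.
-/

open Finset

/-- `h` is an indicator function of a fractional `r`-factor of `G`:
a symmetric edge-weighting with values in `[0,1]`, supported on edges of `G`,
whose weighted degree at each vertex `x` equals `r x`. -/
def IsFracFactor {V : Type*} [Fintype V] (G : SimpleGraph V) (r : V → ℕ)
    (h : V → V → ℝ) : Prop :=
  (∀ x y, h x y = h y x) ∧ (∀ x y, 0 ≤ h x y ∧ h x y ≤ 1) ∧
  (∀ x y, ¬ G.Adj x y → h x y = 0) ∧ ∀ x : V, ∑ y : V, h x y = (r x : ℝ)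

/-- `G` has a fractional `r`-factor. -/
def HasFracFactor {V : Type*} [Fintype V] (G : SimpleGraph V) (r : V → ℕ) : Prop :=
  ∃ h, IsFracFactor G r h

/-- `G` has all fractional `(g,f)`-factors excluding `H`: for every integer-valued
`r` with `g ≤ r ≤ f` pointwise, `G - E(H)` has a fractional `r`-factor. -/
def HasAllFracExcl {V : Type*} [Fintype V] (G H : SimpleGraph V) (g f : V → ℕ) : Prop :=
  ∀ r : V → ℕ, (∀ x, g x ≤ r x ∧ r x ≤ f x) → HasFracFactor (G \ H) r

/-- `G` has all fractional `(g,f)`-factors. -/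
def HasAllFrac {V : Type*} [Fintype V] (G : SimpleGraph V) (g f : V → ℕ) : Prop :=
  ∀ r : V → ℕ, (∀ x, g x ≤ r x ∧ r x ≤ f x) → HasFracFactor G r

/-- Degree of `x` in the induced subgraph `G - S`. -/
def degOut {V : Type*} [Fintype V] [DecidableEq V] (G : SimpleGraph V)
    [DecidableRel G.Adj] (S : Finset V) (x : V) : ℕ :=
  (Sᶜ.filter fun y => G.Adj x y).card

/-- Number of edges of `G` with one end in `S` and the other in `T`
(for disjoint `S`, `T`). -/
def eBtw {V : Type*} [Fintype V] [DecidableEq V] (G : SimpleGraph V)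
    [DecidableRel G.Adj] (S T : Finset V) : ℕ :=
  ∑ x ∈ S, (T.filter fun y => G.Adj x y).card

section Bipartite

variable {α β : Type*} (R : α → β → Prop) [DecidableRel R]

lemma Rel.card_interedges_eq_sum_left (s : Finset α) (t : Finset β) :
    #(Rel.interedges R s t) = ∑ x ∈ s, #{y ∈ t | R x y} := by
  simp only [Rel.interedges, card_filter, sum_product]

lemma Rel.card_interedges_eq_sum_right (s : Finset α) (t : Finset β) :
    #(Rel.interedges R s t) = ∑ y ∈ t, #{x ∈ s | R x y} := by
  simp only [Rel.interedges, card_filter, sum_product_right]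

variable [Fintype α] [Fintype β] [DecidableEq α] [DecidableEq β] (a : α → ℕ) (b : β → ℕ)

-- Each of the `a x` agents at `x` must claim its own arc `(x, y)`, which is then chosen; each of
-- the `deg y - b y` agents at `y` must claim its own arc `(x, y)`, which is then not chosen.
abbrev HallAgent := (Σ x : α, Fin (a x)) ⊕ (Σ y : β, Fin (#{x | R x y} - b y))

variable {R a b}

def HallAgent.arcs : HallAgent R a b → Finset (α × β)
  | .inl i => {p | p.1 = i.1 ∧ R p.1 p.2}
  | .inr j => {p | p.2 = j.1 ∧ R p.1 p.2}

lemma HallAgent.mem_arcs_inl {i : Σ x, Fin (a x)} {p : α × β} :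
    p ∈ arcs (R := R) (b := b) (.inl i) ↔ p.1 = i.1 ∧ R p.1 p.2 := by
  simp [arcs]

lemma HallAgent.mem_arcs_inr {j : Σ y, Fin (#{x | R x y} - b y)} {p : α × β} :
    p ∈ arcs (a := a) (.inr j) ↔ p.2 = j.1 ∧ R p.1 p.2 := by
  simp [arcs]

omit [DecidableEq α] in
lemma sum_add_sum_tsub_le_of_cut
    (hcut : ∀ (A : Finset α) (B : Finset β),
      ∑ x ∈ A, a x ≤ ∑ y ∈ B, b y + #(Rel.interedges R A Bᶜ))
    (X : Finset α) (Y : Finset β) :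
    ∑ x ∈ X, a x + ∑ y ∈ Y, (#{x | R x y} - b y) ≤
      #(Rel.interedges R univ Y) + #(Rel.interedges R X Yᶜ) := by
  -- a vertex `y` with `deg y < b y` has no agents, so it is left out of the cut
  have hc := hcut X {y ∈ Y | b y ≤ #{x | R x y}}
  simp only [Rel.card_interedges_eq_sum_right] at hc ⊢
  have e (s : Finset β) (φ : β → ℕ) : ∑ y ∈ s, φ y = ∑ y, if y ∈ s then φ y else 0 := by
    rw [sum_ite_mem, univ_inter]
  rw [e {y ∈ Y | b y ≤ #{x | R x y}}, e {y ∈ Y | b y ≤ #{x | R x y}}ᶜ, ← sum_add_distrib] at hc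
  rw [e Y, e Y, e Yᶜ, ← sum_add_distrib]
  refine (Nat.add_le_add_right hc _).trans ?_
  rw [← sum_add_distrib]
  refine sum_le_sum fun y _ => ?_
  have hX : #{x ∈ X | R x y} ≤ #{x | R x y} := card_le_card (filter_subset_filter _ (subset_univ X))
  by_cases hY : y ∈ Y <;> by_cases hb : b y ≤ #{x | R x y} <;> simp [hY, hb]
  omega

lemma HallAgent.card_le_card_biUnion_arcs
    (hcut : ∀ (A : Finset α) (B : Finset β),
      ∑ x ∈ A, a x ≤ ∑ y ∈ B, b y + #(Rel.interedges R A Bᶜ))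
    (A : Finset (HallAgent R a b)) :
    #A ≤ #(A.biUnion HallAgent.arcs) := by
  set X : Finset α := A.toLeft.image Sigma.fst
  set Y : Finset β := A.toRight.image Sigma.fst
  have hleft : #A.toLeft ≤ ∑ x ∈ X, a x := by
    calc #A.toLeft ≤ #(X.sigma fun x => (univ : Finset (Fin (a x)))) :=
          card_le_card fun i hi => mem_sigma.mpr ⟨mem_image_of_mem _ hi, mem_univ _⟩
      _ = ∑ x ∈ X, a x := by simp
  have hright : #A.toRight ≤ ∑ y ∈ Y, (#{x | R x y} - b y) := by
    calc #A.toRight ≤ #(Y.sigma fun y => (univ : Finset (Fin (#{x | R x y} - b y)))) :=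
          card_le_card fun j hj => mem_sigma.mpr ⟨mem_image_of_mem _ hj, mem_univ _⟩
      _ = _ := by simp
  have hcover : Rel.interedges R univ Y ∪ Rel.interedges R X Yᶜ ⊆ A.biUnion HallAgent.arcs := by
    intro p hp
    simp only [mem_union, Rel.mem_interedges_iff, mem_univ, true_and, mem_compl] at hp
    rcases hp with ⟨hy, hR⟩ | ⟨hx, -, hR⟩
    · obtain ⟨j, hj, hjp⟩ := mem_image.mp hy
      exact mem_biUnion.mpr ⟨.inr j, mem_toRight.mp hj, by simp [HallAgent.arcs, hjp, hR]⟩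
    · obtain ⟨i, hi, hip⟩ := mem_image.mp hx
      exact mem_biUnion.mpr ⟨.inl i, mem_toLeft.mp hi, by simp [HallAgent.arcs, hip, hR]⟩
  have hdisj : Disjoint (Rel.interedges R univ Y) (Rel.interedges R X Yᶜ) :=
    disjoint_left.mpr fun p hp hp' =>
      (mem_compl.mp (Rel.mem_interedges_iff.mp hp').2.1) (Rel.mem_interedges_iff.mp hp).2.1
  calc #A = #A.toLeft + #A.toRight := card_toLeft_add_card_toRight.symm
    _ ≤ #(Rel.interedges R univ Y) + #(Rel.interedges R X Yᶜ) :=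
      (add_le_add hleft hright).trans (sum_add_sum_tsub_le_of_cut hcut X Y)
    _ = #(Rel.interedges R univ Y ∪ Rel.interedges R X Yᶜ) := (card_union_of_disjoint hdisj).symm
    _ ≤ #(A.biUnion HallAgent.arcs) := card_le_card hcover

section Selection

variable {f : HallAgent R a b → α × β} (hf : Function.Injective f)
  (hfa : ∀ i, f i ∈ i.arcs)
include hf hfa

lemma card_selection_fst (x : α) : #{y | (x, y) ∈ univ.image (f ∘ .inl)} = a x := by
  have hl (i : Σ x, Fin (a x)) : (f (.inl i)).1 = i.1 := (HallAgent.mem_arcs_inl.mp (hfa _)).1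
  have hfiber : ({y | (x, y) ∈ univ.image (f ∘ .inl)} : Finset β) =
      univ.image fun k : Fin (a x) => (f (.inl ⟨x, k⟩)).2 := by
    ext y
    simp only [mem_filter, mem_univ, true_and, mem_image, Function.comp_apply]
    constructor
    · rintro ⟨⟨x', k⟩, hk⟩
      obtain rfl : x = x' := by simpa [hk] using hl ⟨x', k⟩
      exact ⟨k, by rw [hk]⟩
    · rintro ⟨k, hk⟩
      exact ⟨⟨x, k⟩, Prod.ext (hl _) hk⟩
  rw [hfiber, card_image_of_injective, card_univ, Fintype.card_fin]
  intro k k' h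
  simpa using hf (Prod.ext ((hl ⟨x, k⟩).trans (hl ⟨x, k'⟩).symm) h)

lemma card_selection_snd_le (y : β) : #{x | (x, y) ∈ univ.image (f ∘ .inl)} ≤ b y := by
  have hr (j : Σ y, Fin (#{x | R x y} - b y)) := HallAgent.mem_arcs_inr.mp (hfa (.inr j))
  set rejected : Finset α := univ.image fun k : Fin (#{x | R x y} - b y) => (f (.inr ⟨y, k⟩)).1
  have hrejected : #rejected = #{x | R x y} - b y := by
    rw [card_image_of_injective, card_univ, Fintype.card_fin]
    intro k k' h
    simpa using hf (Prod.ext h ((hr ⟨y, k⟩).1.trans (hr ⟨y, k'⟩).1.symm))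
  have hdisj : Disjoint ({x | (x, y) ∈ univ.image (f ∘ .inl)} : Finset α) rejected := by
    refine disjoint_left.mpr fun x hx hx' => ?_
    simp only [mem_filter, mem_univ, true_and, mem_image, Function.comp_apply, rejected] at hx hx'
    obtain ⟨i, hi⟩ := hx
    obtain ⟨k, hk⟩ := hx'
    simpa using hf (hi.trans (Prod.ext hk.symm (hr ⟨y, k⟩).1.symm))
  have hsub : ({x | (x, y) ∈ univ.image (f ∘ .inl)} : Finset α) ∪ rejected ⊆
      ({x | R x y} : Finset α) := by
    intro x hx
    simp only [mem_union, mem_filter, mem_univ, true_and, mem_image, Function.comp_apply,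
      rejected] at hx ⊢
    rcases hx with ⟨i, hi⟩ | ⟨k, hk⟩
    · simpa [hi] using (HallAgent.mem_arcs_inl.mp (hfa (.inl i))).2
    · simpa [hk, (hr _).1] using (hr ⟨y, k⟩).2
  have := card_le_card hsub
  rw [card_union_of_disjoint hdisj, hrejected] at this
  omega

end Selection

theorem Rel.exists_finset_card_fst_eq_card_snd_le
    (hcut : ∀ (A : Finset α) (B : Finset β),
      ∑ x ∈ A, a x ≤ ∑ y ∈ B, b y + #(Rel.interedges R A Bᶜ)) :
    ∃ M : Finset (α × β), (∀ p ∈ M, R p.1 p.2) ∧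
      (∀ x, #{y | (x, y) ∈ M} = a x) ∧ (∀ y, #{x | (x, y) ∈ M} ≤ b y) := by
  obtain ⟨f, hf, hfa⟩ := (all_card_le_biUnion_card_iff_exists_injective HallAgent.arcs).mp
    (HallAgent.card_le_card_biUnion_arcs hcut)
  refine ⟨univ.image (f ∘ .inl), fun p hp => ?_, card_selection_fst hf hfa,
    card_selection_snd_le hf hfa⟩
  obtain ⟨i, -, rfl⟩ := mem_image.mp hp
  exact (HallAgent.mem_arcs_inl.mp (hfa _)).2

theorem Rel.exists_finset_card_fst_eq_card_snd_eq (hsum : ∑ x, a x = ∑ y, b y)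
    (hcut : ∀ (A : Finset α) (B : Finset β),
      ∑ x ∈ A, a x ≤ ∑ y ∈ B, b y + #(Rel.interedges R A Bᶜ)) :
    ∃ M : Finset (α × β), (∀ p ∈ M, R p.1 p.2) ∧
      (∀ x, #{y | (x, y) ∈ M} = a x) ∧ (∀ y, #{x | (x, y) ∈ M} = b y) := by
  obtain ⟨M, hMR, hout, hin⟩ := Rel.exists_finset_card_fst_eq_card_snd_le hcut
  have htotal : ∑ y, #{x | (x, y) ∈ M} = ∑ y, b y :=
    calc ∑ y, #{x | (x, y) ∈ M} = ∑ x, #{y | (x, y) ∈ M} := by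
          simp only [card_filter]; exact sum_comm
      _ = ∑ y, b y := by simp only [hout, hsum]
  exact ⟨M, hMR, hout, fun y => (sum_eq_sum_iff_of_le fun y _ => hin y).mp htotal y (mem_univ y)⟩

end Bipartite

section Graph

variable {V : Type*} [Fintype V] [DecidableEq V]

lemma eBtw_eq_card_interedges (G : SimpleGraph V) [DecidableRel G.Adj] (S T : Finset V) :
    eBtw G S T = #(G.interedges S T) :=
  (Rel.card_interedges_eq_sum_left G.Adj S T).symm

lemma eBtw_comm (G : SimpleGraph V) [DecidableRel G.Adj] (S T : Finset V) :
    eBtw G S T = eBtw G T S := by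
  have : Std.Symm G.Adj := G.symm
  rw [eBtw_eq_card_interedges, eBtw_eq_card_interedges]
  exact Rel.card_interedges_comm S T

lemma degOut_sdiff_add_degree {G H : SimpleGraph V} [DecidableRel G.Adj] [DecidableRel H.Adj]
    (hHG : H ≤ G) (S : Finset V) (x : V) :
    degOut (G \ H) S x + H.degree x = degOut G S x + eBtw H {x} S := by
  have hG : degOut G S x = degOut (G \ H) S x + #{y ∈ Sᶜ | H.Adj x y} := by
    rw [degOut, degOut, ← card_filter_add_card_filter_not (fun y => H.Adj x y),
      filter_filter, filter_filter, add_comm]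
    congr 2
    ext y
    simp only [mem_filter]
    exact and_congr_right fun _ => ⟨fun h => h.2, fun h => ⟨hHG h, h⟩⟩
  have hH : H.degree x = #{y ∈ S | H.Adj x y} + #{y ∈ Sᶜ | H.Adj x y} := by
    rw [← H.card_neighborFinset_eq_degree, H.neighborFinset_eq_filter,
      ← card_union_of_disjoint (disjoint_filter_filter disjoint_compl_right), ← filter_union,
      union_compl]
  rw [hG, hH, eBtw, sum_singleton]
  ring

theorem SimpleGraph.hasFracFactor_of_cut (G : SimpleGraph V) [DecidableRel G.Adj] (r : V → ℕ)
    (hcut : ∀ A B : Finset V, ∑ x ∈ A, r x ≤ ∑ x ∈ B, r x + #(G.interedges A Bᶜ)) :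
    HasFracFactor G r := by
  obtain ⟨M, hMG, hout, hin⟩ := Rel.exists_finset_card_fst_eq_card_snd_eq rfl hcut
  refine ⟨fun x y => ((if (x, y) ∈ M then 1 else 0) + (if (y, x) ∈ M then 1 else 0)) / 2,
    fun x y => by dsimp only; rw [add_comm],
    fun x y => by dsimp only; constructor <;> split_ifs <;> norm_num,
    fun x y hxy => ?_, fun x => ?_⟩
  · have h₁ : (x, y) ∉ M := fun h => hxy (hMG _ h)
    have h₂ : (y, x) ∉ M := fun h => hxy (hMG _ h).symm
    simp [h₁, h₂]
  · dsimp only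
    rw [← sum_div, sum_add_distrib, sum_boole, sum_boole, hout, hin]
    ring

theorem SimpleGraph.cut_of_disjoint_cut (G : SimpleGraph V) [DecidableRel G.Adj] (r : V → ℕ)
    (h : ∀ P Q : Finset V, Disjoint P Q → ∑ x ∈ P, r x ≤ ∑ x ∈ Q, r x + #(G.interedges P Qᶜ))
    (A B : Finset V) :
    ∑ x ∈ A, r x ≤ ∑ x ∈ B, r x + #(G.interedges A Bᶜ) := by
  have hinj : #(G.interedges (A \ B) (B \ A)ᶜ) ≤ #(G.interedges A Bᶜ) := by
    -- swapped pairs start in `B`, the others do not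
    refine card_le_card_of_injOn (fun p => if p.2 ∈ B then p.swap else p) ?_ ?_
    · rintro ⟨x, y⟩ hp
      simp only [mem_coe, SimpleGraph.mk_mem_interedges_iff, mem_sdiff, mem_compl] at hp
      by_cases hy : y ∈ B
      · simp only [hy, if_true, Prod.swap_prod_mk, mem_coe, SimpleGraph.mk_mem_interedges_iff,
          mem_compl]
        exact ⟨by_contra fun hyA => hp.2.1 ⟨hy, hyA⟩, hp.1.2, hp.2.2.symm⟩
      · simp only [hy, if_false, mem_coe, SimpleGraph.mk_mem_interedges_iff, mem_compl,
          not_false_eq_true, true_and]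
        exact ⟨hp.1.1, hp.2.2⟩
    · rintro ⟨x, y⟩ hp ⟨x', y'⟩ hp' h
      simp only [mem_coe, SimpleGraph.mk_mem_interedges_iff, mem_sdiff] at hp hp'
      by_cases hy : y ∈ B <;> by_cases hy' : y' ∈ B <;>
        simp only [hy, hy', if_true, if_false, Prod.swap_prod_mk, Prod.mk.injEq] at h
      · rw [h.1, h.2]
      · exact absurd (h.1 ▸ hy) hp'.1.2
      · exact absurd (h.1 ▸ hy') hp.1.2
      · rw [h.1, h.2]
  have := h (A \ B) (B \ A) disjoint_sdiff_sdiff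
  rw [← sum_inter_add_sum_sdiff A B, ← sum_inter_add_sum_sdiff B A, inter_comm]
  omega

theorem SimpleGraph.disjoint_cut_of_deficiency_le (G : SimpleGraph V) [DecidableRel G.Adj]
    {g r f : V → ℕ} (hr : ∀ x, g x ≤ r x ∧ r x ≤ f x)
    (hdef : ∀ S : Finset V, ∑ x ∈ Sᶜ, (f x - degOut G S x) ≤ ∑ x ∈ S, g x)
    (P Q : Finset V) (hPQ : Disjoint P Q) :
    ∑ x ∈ P, r x ≤ ∑ x ∈ Q, r x + #(G.interedges P Qᶜ) := by
  calc ∑ x ∈ P, r x ≤ ∑ x ∈ P, ((f x - degOut G Q x) + degOut G Q x) :=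
        sum_le_sum fun x _ => by have := (hr x).2; omega
    _ = ∑ x ∈ P, (f x - degOut G Q x) + #(G.interedges P Qᶜ) := by
        rw [sum_add_distrib, ← eBtw_eq_card_interedges]; rfl
    _ ≤ ∑ x ∈ Qᶜ, (f x - degOut G Q x) + #(G.interedges P Qᶜ) := by
        gcongr
        exact fun x hx => mem_compl.mpr (Finset.disjoint_left.mp hPQ hx)
    _ ≤ ∑ x ∈ Q, r x + #(G.interedges P Qᶜ) := by
        gcongr
        exact (hdef Q).trans (sum_le_sum fun x _ => (hr x).1)

theorem sum_tsub_degOut_sdiff_le {G H : SimpleGraph V} [DecidableRel G.Adj] [DecidableRel H.Adj]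
    {g f : V → ℕ} (hHG : H ≤ G)
    (hcond : ∀ S T : Finset V,
      T = Sᶜ.filter (fun x =>
        (degOut G S x : ℤ) - H.degree x + eBtw H {x} S < f x) →
      (∑ x ∈ S, (g x : ℤ)) + ∑ x ∈ T, (degOut G S x : ℤ) - ∑ x ∈ T, (f x : ℤ)
        ≥ ∑ x ∈ T, (H.degree x : ℤ) - eBtw H S T)
    (S : Finset V) :
    ∑ x ∈ Sᶜ, (f x - degOut (G \ H) S x) ≤ ∑ x ∈ S, g x := by
  have hdeg (x : V) : (degOut (G \ H) S x : ℤ) = degOut G S x - H.degree x + eBtw H {x} S := by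
    have := degOut_sdiff_add_degree hHG S x
    omega
  set T := Sᶜ.filter fun x => (degOut (G \ H) S x : ℤ) < f x
  have hc := hcond S T (filter_congr fun x _ => by rw [hdeg])
  have hcross : (eBtw H S T : ℤ) = ∑ x ∈ T, (eBtw H {x} S : ℤ) := by
    rw [eBtw_comm, eBtw]
    simp only [eBtw, sum_singleton, Nat.cast_sum]
  have hdef : ((∑ x ∈ Sᶜ, (f x - degOut (G \ H) S x) : ℕ) : ℤ) =
      ∑ x ∈ T, ((f x : ℤ) - degOut (G \ H) S x) := by
    rw [← sum_filter_of_ne (p := fun x => (degOut (G \ H) S x : ℤ) < f x) fun x _ h => by omega,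
      Nat.cast_sum]
    refine sum_congr rfl fun x hx => ?_
    have := (mem_filter.mp hx).2
    omega
  have hsplit : ∑ x ∈ T, ((f x : ℤ) - degOut (G \ H) S x) = ∑ x ∈ T, (f x : ℤ) -
      ∑ x ∈ T, (degOut G S x : ℤ) + ∑ x ∈ T, (H.degree x : ℤ) - ∑ x ∈ T, (eBtw H {x} S : ℤ) := by
    simp only [hdeg, sum_sub_distrib, sum_add_distrib]
    ring
  rw [← Nat.cast_le (α := ℤ), hdef, Nat.cast_sum]
  linarith

end Graph

theorem stmt0_general {V : Type*} [Fintype V] [DecidableEq V] (G H : SimpleGraph V)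
    [DecidableRel G.Adj] [DecidableRel H.Adj]
    (g f : V → ℕ) (hHG : H ≤ G)
    (hcond : ∀ S T : Finset V,
      T = Sᶜ.filter (fun x =>
        (degOut G S x : ℤ) - H.degree x + eBtw H {x} S < f x) →
      (∑ x ∈ S, (g x : ℤ)) + ∑ x ∈ T, (degOut G S x : ℤ) - ∑ x ∈ T, (f x : ℤ)
        ≥ ∑ x ∈ T, (H.degree x : ℤ) - eBtw H S T) :
    HasAllFracExcl G H g f := fun r hr =>
  (G \ H).hasFracFactor_of_cut r <| (G \ H).cut_of_disjoint_cut r <|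
    (G \ H).disjoint_cut_of_deficiency_le hr (sum_tsub_degOut_sdiff_le hHG hcond)

/-- Sufficiency in Theorem 5: the deficiency condition implies `G` has all
fractional `(g,f)`-factors excluding `H`. -/
theorem stmt0 {V : Type*} [Fintype V] [DecidableEq V] (G H : SimpleGraph V)
    [DecidableRel G.Adj] [DecidableRel H.Adj]
    (g f : V → ℕ) (hg : ∀ x, 1 ≤ g x) (hgf : ∀ x, g x ≤ f x) (hHG : H ≤ G)
    (hcond : ∀ S T : Finset V,
      T = Sᶜ.filter (fun x =>
        (degOut G S x : ℤ) - H.degree x + eBtw H {x} S < f x) →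
      (∑ x ∈ S, (g x : ℤ)) + ∑ x ∈ T, (degOut G S x : ℤ) - ∑ x ∈ T, (f x : ℤ)
        ≥ ∑ x ∈ T, (H.degree x : ℤ) - eBtw H S T) :
    HasAllFracExcl G H g f :=
  stmt0_general G H g f hHG hcond
end

section
/- Let G be a finite simple graph, F a complete-factor of G with ω(F)≥2 components, g,f:V(G)→ℤ⁺ with g(x)≤f(x) for all x, and H a subgraph of G. If for every component C of F the graph G−V(C) admits all fractional (g,f)-factors excluding H (restricted to G−V(C)), then G itself admits all fractional (g,f)-factors excluding H. -/
open Finset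

attribute [local instance] Classical.propDecidable

/-! A vertex `x` lies in `G - V(C)` for exactly `ω - 1` components `C` of `F`. Extend the
fractional `r`-factors of the graphs `(G - V(C)) - E(H)` by zero to all of `V`, add them up and
divide by `ω - 1`: the weighted degree of `x` becomes `r x`, and each weight stays at most `1`
because at most `ω - 1` of the summands are nonzero at any edge. -/

namespace IsFracFactor

variable {V : Type*} {G : SimpleGraph V} {r : V → ℕ}

noncomputable def extendByZero (s : Set V) (h : s → s → ℝ) (x y : V) : ℝ :=
  if hxy : x ∈ s ∧ y ∈ s then h ⟨x, hxy.1⟩ ⟨y, hxy.2⟩ else 0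

variable {s : Set V} {h : s → s → ℝ}

lemma extendByZero_of_notMem {x : V} (hx : x ∉ s) (y : V) : extendByZero s h x y = 0 :=
  dif_neg fun hxy => hx hxy.1

variable [Fintype s]

lemma extendByZero_symm (hh : IsFracFactor (G.induce s) (fun x => r x) h) (x y : V) :
    extendByZero s h x y = extendByZero s h y x := by
  unfold extendByZero
  by_cases hxy : x ∈ s ∧ y ∈ s
  · rw [dif_pos hxy, dif_pos hxy.symm, hh.1]
  · rw [dif_neg hxy, dif_neg fun hyx => hxy hyx.symm]

lemma extendByZero_mem_Icc (hh : IsFracFactor (G.induce s) (fun x => r x) h) (x y : V) :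
    0 ≤ extendByZero s h x y ∧ extendByZero s h x y ≤ 1 := by
  unfold extendByZero
  split_ifs
  exacts [hh.2.1 _ _, ⟨le_rfl, zero_le_one⟩]

lemma extendByZero_eq_zero_of_not_adj (hh : IsFracFactor (G.induce s) (fun x => r x) h)
    {x y : V} (hxy : ¬ G.Adj x y) : extendByZero s h x y = 0 := by
  unfold extendByZero
  split_ifs
  exacts [hh.2.2.1 _ _ hxy, rfl]

lemma sum_extendByZero [Fintype V] (hh : IsFracFactor (G.induce s) (fun x => r x) h) {x : V}
    (hx : x ∈ s) :
    ∑ y, extendByZero s h x y = r x := by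
  rw [← hh.2.2.2 ⟨x, hx⟩, ← sum_subset (subset_univ (univ.filter (· ∈ s))),
    sum_subtype (p := (· ∈ s)) _ (fun y => by simp)]
  · exact sum_congr rfl fun y _ => dif_pos ⟨hx, y.2⟩
  · intro y _ hy
    exact dif_neg fun hxy => by simp [hxy.2] at hy

end IsFracFactor

open IsFracFactor in
theorem HasFracFactor.of_uniform_cover {V ι : Type*} [Fintype V] [Fintype ι]
    {G : SimpleGraph V} {r : V → ℕ} (s : ι → Set V) [∀ i, Fintype (s i)] {k : ℕ} (hk : 0 < k)
    [∀ i, DecidablePred (· ∈ s i)] (hcover : ∀ x, #{i | x ∈ s i} = k)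
    (hfac : ∀ i, HasFracFactor (G.induce (s i)) (fun x => r x)) :
    HasFracFactor G r := by
  choose h hh using hfac
  have hk' : (0 : ℝ) < k := Nat.cast_pos.mpr hk
  have sum_eq_filter : ∀ (x : V) (φ : ι → ℝ), (∀ i, x ∉ s i → φ i = 0) →
      ∑ i, φ i = ∑ i with x ∈ s i, φ i := fun x φ hφ =>
    (sum_subset (subset_univ _) fun i _ hi => hφ i (by simpa using hi)).symm
  refine ⟨fun x y => (∑ i, extendByZero (s i) (h i) x y) / k, fun x y => ?_, fun x y => ?_,
    fun x y hxy => ?_, fun x => ?_⟩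
  · simp only [extendByZero_symm (hh _) x y]
  · refine ⟨div_nonneg (sum_nonneg fun i _ => (extendByZero_mem_Icc (hh i) x y).1) hk'.le,
      (div_le_one hk').mpr ?_⟩
    calc ∑ i, extendByZero (s i) (h i) x y
        = ∑ i with x ∈ s i, extendByZero (s i) (h i) x y :=
          sum_eq_filter x _ fun i hi => extendByZero_of_notMem hi y
      _ ≤ ∑ i with x ∈ s i, (1 : ℝ) :=
          sum_le_sum fun i _ => (extendByZero_mem_Icc (hh i) x y).2
      _ = k := by rw [sum_const, hcover, nsmul_one]
  · simp only [extendByZero_eq_zero_of_not_adj (hh _) hxy, sum_const_zero, zero_div]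
  · rw [← sum_div, sum_comm, div_eq_iff hk'.ne']
    calc ∑ i, ∑ y, extendByZero (s i) (h i) x y
        = ∑ i with x ∈ s i, ∑ y, extendByZero (s i) (h i) x y :=
          sum_eq_filter x _ fun i hi => sum_eq_zero fun y _ => extendByZero_of_notMem hi y
      _ = ∑ i with x ∈ s i, (r x : ℝ) :=
          sum_congr rfl fun i hi => sum_extendByZero (hh i) (mem_filter.mp hi).2
      _ = r x * k := by rw [sum_const, hcover, nsmul_eq_mul, mul_comm]

lemma SimpleGraph.induce_sdiff {V : Type*} (s : Set V) (G H : SimpleGraph V) :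
    (G \ H).induce s = G.induce s \ H.induce s :=
  rfl

lemma SimpleGraph.ConnectedComponent.card_filter_notMem_supp {V : Type*} {F : SimpleGraph V}
    [Fintype F.ConnectedComponent] [∀ C : F.ConnectedComponent, DecidablePred (· ∈ C.suppᶜ)]
    (x : V) :
    #{C : F.ConnectedComponent | x ∈ C.suppᶜ} = Fintype.card F.ConnectedComponent - 1 := by
  rw [← card_univ, ← card_erase_of_mem (mem_univ (F.connectedComponentMk x)), ← filter_ne]
  exact congrArg card (filter_congr fun C _ => by simp [mem_supp_iff, eq_comm])

theorem stmt3_general {V : Type*} [Fintype V] [DecidableEq V] (G H F : SimpleGraph V)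
    (g f : V → ℕ)
    (hω : 2 ≤ Fintype.card F.ConnectedComponent)
    (hcomp : ∀ C : F.ConnectedComponent,
      HasAllFracExcl (G.induce C.suppᶜ) (H.induce C.suppᶜ)
        (fun x => g x.1) (fun x => f x.1)) :
    HasAllFracExcl G H g f := by
  intro r hr
  refine HasFracFactor.of_uniform_cover (fun C : F.ConnectedComponent => C.suppᶜ) ?_
    SimpleGraph.ConnectedComponent.card_filter_notMem_supp fun C => ?_
  · omega
  · rw [SimpleGraph.induce_sdiff]
    exact hcomp C (fun x => r x) fun x => hr x

/-- Theorem 6: if `F` is a complete-factor of `G` with at least two components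
and `G − V(C)` has all fractional `(g,f)`-factors excluding `H` for each
component `C` of `F`, then so does `G`. -/
theorem stmt3 {V : Type*} [Fintype V] [DecidableEq V] (G H F : SimpleGraph V)
    (g f : V → ℕ) (hg : ∀ x, 1 ≤ g x) (hgf : ∀ x, g x ≤ f x)
    (hHG : H ≤ G) (hFG : F ≤ G)
    (hcomplete : ∀ x y : V, F.Reachable x y → x ≠ y → F.Adj x y)
    (hω : 2 ≤ Fintype.card F.ConnectedComponent)
    (hcomp : ∀ C : F.ConnectedComponent,
      HasAllFracExcl (G.induce C.suppᶜ) (H.induce C.suppᶜ)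
        (fun x => g x.1) (fun x => f x.1)) :
    HasAllFracExcl G H g f :=
  stmt3_general G H F g f hω hcomp
end

section
/- Let G be a finite simple graph, H a subgraph of G, and S,T disjoint subsets of V(G) with S nonempty. Suppose D:=∑_{x∈S}d_G(x) satisfies D·f(T) ≤ g(S)·(∑_{x∈T}d_G(x) − ∑_{x∈T}d_H(x)) and D ≥ g(S) ≥ 1. Then g(S)+∑_{x∈T} d_{G−S}(x) − f(T) − ∑_{x∈T} d_H(x) + e_H(S,T) ≥ 0. -/
open Finset

/-!
Split the degree of each `x ∈ T` into its neighbours inside and outside `S`: then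
`∑_T d_G = ∑_T d_{G-S} + e_G(S,T)` and, as `H ≤ G`, `∑_T d_H ≤ ∑_T d_{G-S} + e_H(S,T)`.
With `X := ∑_T d_{G-S} + e_H(S,T) - ∑_T d_H ≥ 0` the hypothesis reads
`D f(T) ≤ g(S) (X + e_G(S,T) - e_H(S,T)) ≤ D X + D g(S)`, using `g(S) ≤ D` and
`e_G(S,T) ≤ D`; dividing by `D > 0` gives `f(T) ≤ g(S) + X`.
-/

section Arithmetic

variable {R : Type*} [CommRing R] [LinearOrder R] [IsStrictOrderedRing R]

lemma le_add_of_mul_le_mul_add_sub {D a X e e' F : R} (hD : 0 < D) (ha : 0 ≤ a)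
    (haD : a ≤ D) (hX : 0 ≤ X) (heD : e ≤ D) (he' : 0 ≤ e')
    (h : D * F ≤ a * (X + e - e')) : F ≤ a + X := by
  refine le_of_mul_le_mul_left ?_ hD
  calc D * F ≤ a * (X + e - e') := h
    _ ≤ a * X + a * e := by
      rw [mul_sub, mul_add]; exact sub_le_self _ (mul_nonneg ha he')
    _ ≤ D * X + a * D := by gcongr
    _ = D * (a + X) := by ring

end Arithmetic

section Degrees

variable {V : Type*} [Fintype V] [DecidableEq V]

lemma degree_eq_card_filter_adj_add_degOut (G : SimpleGraph V) [DecidableRel G.Adj]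
    (S : Finset V) (x : V) :
    G.degree x = #{y ∈ S | G.Adj x y} + degOut G S x := by
  rw [← G.card_neighborFinset_eq_degree, G.neighborFinset_eq_filter, degOut,
    ← card_union_of_disjoint (disjoint_filter_filter disjoint_compl_right),
    ← filter_union, union_compl]

lemma degOut_mono {G H : SimpleGraph V} [DecidableRel G.Adj] [DecidableRel H.Adj]
    (hHG : H ≤ G) (S : Finset V) (x : V) : degOut H S x ≤ degOut G S x :=
  card_le_card (monotone_filter_right _ fun _ _ h => hHG h)

lemma sum_degree_eq_sum_degOut_add_eBtw (G : SimpleGraph V) [DecidableRel G.Adj]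
    (S T : Finset V) :
    ∑ x ∈ T, G.degree x = ∑ x ∈ T, degOut G S x + eBtw G S T := by
  rw [eBtw_comm, eBtw, ← sum_add_distrib]
  exact sum_congr rfl fun x _ => by
    rw [degree_eq_card_filter_adj_add_degOut G S x, Nat.add_comm]

lemma sum_degree_le_sum_degOut_add_eBtw {G H : SimpleGraph V} [DecidableRel G.Adj]
    [DecidableRel H.Adj] (hHG : H ≤ G) (S T : Finset V) :
    ∑ x ∈ T, H.degree x ≤ ∑ x ∈ T, degOut G S x + eBtw H S T := by
  rw [sum_degree_eq_sum_degOut_add_eBtw H S T]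
  gcongr with x
  exact degOut_mono hHG S x

lemma eBtw_le_sum_degree (G : SimpleGraph V) [DecidableRel G.Adj] (S T : Finset V) :
    eBtw G S T ≤ ∑ x ∈ S, G.degree x := by
  refine sum_le_sum fun x _ => ?_
  rw [← G.card_neighborFinset_eq_degree, G.neighborFinset_eq_filter]
  exact card_le_card (filter_subset_filter _ (subset_univ T))

end Degrees

theorem stmt11_general {V : Type*} [Fintype V] [DecidableEq V] (G H : SimpleGraph V)
    [DecidableRel G.Adj] [DecidableRel H.Adj] (hHG : H ≤ G)
    (g f : V → ℕ) (S T : Finset V)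
    (hD1 : (∑ x ∈ S, (G.degree x : ℤ)) * (∑ x ∈ T, (f x : ℤ)) ≤
      (∑ x ∈ S, (g x : ℤ)) *
        ((∑ x ∈ T, (G.degree x : ℤ)) - ∑ x ∈ T, (H.degree x : ℤ)))
    (hD2 : (∑ x ∈ S, (g x : ℤ)) ≤ ∑ x ∈ S, (G.degree x : ℤ))
    (hD3 : 1 ≤ ∑ x ∈ S, (g x : ℤ)) :
    0 ≤ (∑ x ∈ S, (g x : ℤ)) + ∑ x ∈ T, (degOut G S x : ℤ)
      - ∑ x ∈ T, (f x : ℤ) - ∑ x ∈ T, (H.degree x : ℤ) + eBtw H S T := by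
  have hG : ∑ x ∈ T, (G.degree x : ℤ) = ∑ x ∈ T, (degOut G S x : ℤ) + eBtw G S T := by
    exact_mod_cast sum_degree_eq_sum_degOut_add_eBtw G S T
  have hH : ∑ x ∈ T, (H.degree x : ℤ) ≤ ∑ x ∈ T, (degOut G S x : ℤ) + eBtw H S T := by
    exact_mod_cast sum_degree_le_sum_degOut_add_eBtw hHG S T
  have heG : (eBtw G S T : ℤ) ≤ ∑ x ∈ S, (G.degree x : ℤ) := by
    exact_mod_cast eBtw_le_sum_degree G S T
  have hD1' : (∑ x ∈ S, (G.degree x : ℤ)) * ∑ x ∈ T, (f x : ℤ) ≤ (∑ x ∈ S, (g x : ℤ)) *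
      ((∑ x ∈ T, (degOut G S x : ℤ) + eBtw H S T - ∑ x ∈ T, (H.degree x : ℤ))
        + eBtw G S T - eBtw H S T) := by
    rw [hG] at hD1; linarith
  have := le_add_of_mul_le_mul_add_sub (by omega) (by omega) hD2 (sub_nonneg.2 hH) heG
    (Int.natCast_nonneg _) hD1'
  linarith

/-- The nonempty-`S` computation in the proof of Theorem 9. -/
theorem stmt11 {V : Type*} [Fintype V] [DecidableEq V] (G H : SimpleGraph V)
    [DecidableRel G.Adj] [DecidableRel H.Adj] (hHG : H ≤ G)
    (g f : V → ℕ) (S T : Finset V) (hS : S.Nonempty) (hST : Disjoint S T)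
    (hD1 : (∑ x ∈ S, (G.degree x : ℤ)) * (∑ x ∈ T, (f x : ℤ)) ≤
      (∑ x ∈ S, (g x : ℤ)) *
        ((∑ x ∈ T, (G.degree x : ℤ)) - ∑ x ∈ T, (H.degree x : ℤ)))
    (hD2 : (∑ x ∈ S, (g x : ℤ)) ≤ ∑ x ∈ S, (G.degree x : ℤ))
    (hD3 : 1 ≤ ∑ x ∈ S, (g x : ℤ)) :
    0 ≤ (∑ x ∈ S, (g x : ℤ)) + ∑ x ∈ T, (degOut G S x : ℤ)
      - ∑ x ∈ T, (f x : ℤ) - ∑ x ∈ T, (H.degree x : ℤ) + eBtw H S T :=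
  stmt11_general G H hHG g f S T hD1 hD2 hD3
end

section
/- Let G be a finite simple graph, g,f:V(G)→ℤ⁺ with g(x)≤f(x) for all x, and suppose there exists S⊆V(G) with T={x∈V(G)∖S : d_{G−S}(x)<f(x)} such that g(S)+∑_{x∈T}d_{G−S}(x)−f(T) < 0. Define r by r(x)=g(x) for x∈S and r(x)=f(x) for x∉S. Then G has no fractional r-factor. -/
open Finset

/-! Anstee's inequality `r(S) + ∑_{x ∈ T} d_{G-S}(x) - r(T) ≥ 0` holds for every fractional
`r`-factor and all `S`, `T`: of the weight `r x` at `x ∈ T`, the part going into `S` sums over `T`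
to at most `r(S)`, and the part staying outside `S` is at most `d_{G-S}(x)`, because weights are at
most `1` and vanish off edges. For `r = g` on `S`, `r = f` off `S` and `T ⊆ V ∖ S` this
contradicts the deficiency of `(S, T)`. -/

namespace IsFracFactor

variable {V : Type*} [Fintype V] {G : SimpleGraph V} {r : V → ℕ} {h : V → V → ℝ}

theorem sum_compl_le_degOut [DecidableEq V] [DecidableRel G.Adj] (hh : IsFracFactor G r h)
    (S : Finset V) (x : V) : ∑ y ∈ Sᶜ, h x y ≤ degOut G S x := by
  obtain ⟨-, hbd, hsupp, -⟩ := hh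
  have hsupport : ∑ y ∈ Sᶜ, h x y = ∑ y ∈ Sᶜ.filter (G.Adj x), h x y :=
    (sum_filter_of_ne fun y _ hne => by_contra fun hadj => hne (hsupp x y hadj)).symm
  rw [hsupport, degOut, ← nsmul_one, ← sum_const]
  exact sum_le_sum fun y _ => (hbd x y).2

theorem sum_sum_le (hh : IsFracFactor G r h) (S T : Finset V) :
    ∑ x ∈ T, ∑ y ∈ S, h x y ≤ ∑ y ∈ S, (r y : ℝ) := by
  obtain ⟨hsym, hbd, -, hdeg⟩ := hh
  calc ∑ x ∈ T, ∑ y ∈ S, h x y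
      ≤ ∑ x, ∑ y ∈ S, h x y :=
        sum_le_sum_of_subset_of_nonneg (subset_univ T) fun x _ _ =>
          sum_nonneg fun y _ => (hbd x y).1
    _ = ∑ y ∈ S, ∑ x, h y x := by
        rw [sum_comm]
        exact sum_congr rfl fun y _ => sum_congr rfl fun x _ => hsym x y
    _ = ∑ y ∈ S, (r y : ℝ) := sum_congr rfl fun y _ => hdeg y

theorem sum_le_add_sum_degOut [DecidableEq V] [DecidableRel G.Adj] (hh : IsFracFactor G r h)
    (S T : Finset V) :
    ∑ x ∈ T, (r x : ℝ) ≤ ∑ x ∈ S, (r x : ℝ) + ∑ x ∈ T, (degOut G S x : ℝ) :=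
  calc ∑ x ∈ T, (r x : ℝ)
      = ∑ x ∈ T, ∑ y ∈ S, h x y + ∑ x ∈ T, ∑ y ∈ Sᶜ, h x y := by
        rw [← sum_add_distrib]
        exact sum_congr rfl fun x _ => by rw [sum_add_sum_compl, hh.2.2.2 x]
    _ ≤ ∑ x ∈ S, (r x : ℝ) + ∑ x ∈ T, (degOut G S x : ℝ) :=
        add_le_add (hh.sum_sum_le S T) (sum_le_sum fun x _ => hh.sum_compl_le_degOut S x)

end IsFracFactor

theorem stmt14_general {V : Type*} [Fintype V] [DecidableEq V] (G : SimpleGraph V)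
    [DecidableRel G.Adj]
    (g f : V → ℕ)
    (S T : Finset V) (hT : T = Sᶜ.filter fun x => degOut G S x < f x)
    (hdef : (∑ x ∈ S, (g x : ℤ)) + ∑ x ∈ T, (degOut G S x : ℤ)
      - ∑ x ∈ T, (f x : ℤ) < 0) :
    ¬ HasFracFactor G (fun x => if x ∈ S then g x else f x) := by
  rintro ⟨h, hh⟩
  have hTS : ∀ x ∈ T, x ∉ S := fun x hx => mem_compl.mp (mem_filter.mp (hT ▸ hx)).1
  have hAnstee := hh.sum_le_add_sum_degOut S T
  have hrS : ∑ x ∈ S, ((if x ∈ S then g x else f x : ℕ) : ℝ) = ∑ x ∈ S, (g x : ℝ) :=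
    sum_congr rfl fun x hx => by rw [if_pos hx]
  have hrT : ∑ x ∈ T, ((if x ∈ S then g x else f x : ℕ) : ℝ) = ∑ x ∈ T, (f x : ℝ) :=
    sum_congr rfl fun x hx => by rw [if_neg (hTS x hx)]
  have hdef' : (∑ x ∈ S, (g x : ℝ)) + ∑ x ∈ T, (degOut G S x : ℝ) - ∑ x ∈ T, (f x : ℝ) < 0 := by
    exact_mod_cast hdef
  linarith

/-- The necessity construction in Lu's theorem: a deficient pair `(S, T)` yields
an `r` (equal to `g` on `S` and `f` off `S`) with no fractional `r`-factor. -/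
theorem stmt14 {V : Type*} [Fintype V] [DecidableEq V] (G : SimpleGraph V)
    [DecidableRel G.Adj]
    (g f : V → ℕ) (hg : ∀ x, 1 ≤ g x) (hgf : ∀ x, g x ≤ f x)
    (S T : Finset V) (hT : T = Sᶜ.filter fun x => degOut G S x < f x)
    (hdef : (∑ x ∈ S, (g x : ℤ)) + ∑ x ∈ T, (degOut G S x : ℤ)
      - ∑ x ∈ T, (f x : ℤ) < 0) :
    ¬ HasFracFactor G (fun x => if x ∈ S then g x else f x) :=
  stmt14_general G g f S T hT hdef
end
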